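/- The function β(c) = 2(2+c)·arcosh(c/2+1) - 2·√(c²+4c) is strictly convex on (0,∞). -/

import Mathlib

noncomputable def arcosh (x : ℝ) : ℝ := Real.log (x + Real.sqrt (x^2 - 1))

noncomputable def β (c : ℝ) : ℝ :=
  2*(2+c) * arcosh (c/2 + 1) - 2 * Real.sqrt (c^2 + 4*c)

lemma hasDerivAt_arcosh {x : ℝ} (hx : 1 < x) :
    HasDerivAt arcosh (1 / Real.sqrt (x^2 - 1)) x := by
  have hx0 : (0:ℝ) < x^2 - 1 := by nlinarith
  have hs : 0 < Real.sqrt (x^2 - 1) := Real.sqrt_pos.mpr hx0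
  have h1 : HasDerivAt (fun y : ℝ => y^2 - 1) (2*x) x := by
    simpa using ((hasDerivAt_pow 2 x).sub_const 1)
  have h2 : HasDerivAt (fun y : ℝ => Real.sqrt (y^2 - 1)) (2*x / (2 * Real.sqrt (x^2-1))) x :=
    h1.sqrt (ne_of_gt hx0)
  have h3 : HasDerivAt (fun y : ℝ => y + Real.sqrt (y^2 - 1))
      (1 + 2*x / (2 * Real.sqrt (x^2-1))) x := (hasDerivAt_id x).add h2
  have hpos : 0 < x + Real.sqrt (x^2 - 1) := by positivity
  have h4 := h3.log (ne_of_gt hpos)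
  have heq : (1 + 2*x / (2 * Real.sqrt (x^2-1))) / (x + Real.sqrt (x^2 - 1))
      = 1 / Real.sqrt (x^2 - 1) := by
    field_simp
    ring
  rw [heq] at h4
  exact h4

lemma hasDerivAt_beta {c : ℝ} (hc : 0 < c) :
    HasDerivAt β (2 * arcosh (c/2 + 1)) c := by
  have hc1 : 1 < c/2 + 1 := by linarith
  have hq : (0:ℝ) < c^2 + 4*c := by nlinarith
  have hsq : Real.sqrt ((c/2+1)^2 - 1) = Real.sqrt (c^2 + 4*c) / 2 := by
    rw [show (c/2+1)^2 - 1 = (c^2 + 4*c) / 4 by ring,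
      Real.sqrt_div (by nlinarith : (0:ℝ) ≤ c^2 + 4*c),
      show Real.sqrt 4 = 2 by
        rw [show (4:ℝ) = 2^2 by norm_num, Real.sqrt_sq (by norm_num : (0:ℝ) ≤ 2)]]
  -- derivative of inner affine map
  have haff : HasDerivAt (fun c : ℝ => c/2 + 1) (1/2) c := by
    simpa using ((hasDerivAt_id c).div_const 2).add_const 1
  have harc : HasDerivAt (fun c : ℝ => arcosh (c/2 + 1))
      (1 / Real.sqrt ((c/2+1)^2 - 1) * (1/2)) c :=
    by have := (hasDerivAt_arcosh hc1).comp c haff; exact this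
  have hmul : HasDerivAt (fun c : ℝ => 2*(2+c) * arcosh (c/2 + 1))
      (2 * arcosh (c/2+1) + 2*(2+c) * (1 / Real.sqrt ((c/2+1)^2 - 1) * (1/2))) c := by
    have h5 : HasDerivAt (fun c : ℝ => 2*(2+c)) 2 c := by
      simpa using ((hasDerivAt_id c).const_add 2).const_mul 2
    simpa [Pi.mul_def] using h5.mul harc
  have hq' : HasDerivAt (fun c : ℝ => c^2 + 4*c) (2*c + 4) c := by
    have := (hasDerivAt_pow 2 c).add ((hasDerivAt_id c).const_mul 4)
    simpa [mul_comm, Pi.add_def] using this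
  have hsqrt : HasDerivAt (fun c : ℝ => 2 * Real.sqrt (c^2 + 4*c))
      (2 * ((2*c + 4) / (2 * Real.sqrt (c^2 + 4*c)))) c :=
    (hq'.sqrt (ne_of_gt hq)).const_mul 2
  have h := hmul.sub hsqrt
  have hS : 0 < Real.sqrt (c^2 + 4*c) := Real.sqrt_pos.mpr hq
  have : 2 * arcosh (c/2+1) + 2*(2+c) * (1 / Real.sqrt ((c/2+1)^2 - 1) * (1/2))
      - 2 * ((2*c + 4) / (2 * Real.sqrt (c^2 + 4*c))) = 2 * arcosh (c/2+1) := by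
    rw [hsq]
    field_simp
    ring
  rw [this] at h
  exact h

lemma arcosh_strictMono : ∀ x y : ℝ, 1 ≤ x → x < y → arcosh x < arcosh y := by
  intro x y hx hxy
  have hx0 : (0:ℝ) ≤ x^2 - 1 := by nlinarith
  have hpos : 0 < x + Real.sqrt (x^2 - 1) := by positivity
  apply Real.log_lt_log hpos
  have : Real.sqrt (x^2 - 1) ≤ Real.sqrt (y^2 - 1) :=
    Real.sqrt_le_sqrt (by nlinarith)
  linarith

theorem beta_strictConvex : StrictConvexOn ℝ (Set.Ioi (0 : ℝ)) β := by
  apply StrictMonoOn.strictConvexOn_of_deriv (convex_Ioi 0)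
  · intro c hc
    exact ((hasDerivAt_beta hc).continuousAt).continuousWithinAt
  · rw [interior_Ioi]
    intro a ha b hb hab
    rw [(hasDerivAt_beta ha).deriv, (hasDerivAt_beta hb).deriv]
    have := arcosh_strictMono (a/2 + 1) (b/2 + 1) (by simp [le_of_lt (Set.mem_Ioi.mp ha)]; linarith [Set.mem_Ioi.mp ha]) (by simp at ha hb ⊢; linarith)
    linarith
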